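/- arXiv:1910.05702 — 2 statements merged into one kernel-verified Lean document; each statement's English description precedes it below -/
import Mathlib

section
/- If all jobs have Z-ratio equal to 1, then for any schedule S assigning the jobs to m machines, the total expected reward ER[S] equals m - ∑_{h=1}^m P_h(S), where P_h(S) is the product of the success probabilities of the jobs assigned to machine h (an empty product equals 1). -/
open Finset

/-- Expected reward of a machine processing jobs in the given list order:
each job contributes (prefix product of probabilities up to and including it)
times its reward. -/
def machineER {α : Type*} (π r : α → ℝ) : List α → ℝ
  | [] => 0
  | j :: L => π j * r j + π j * machineER π r L

lemma machineER_eq {α : Type*} (π r : α → ℝ) (hπ : ∀ j, π j ≠ 0)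
    (hr : ∀ j, r j = (1 - π j) / π j) :
    ∀ L : List α, machineER π r L = 1 - (L.map π).prod := by
  intro L
  induction L with
  | nil => simp [machineER]
  | cons j L ih =>
      simp only [machineER, ih, List.map_cons, List.prod_cons, hr]
      rw [mul_div_cancel₀ _ (hπ j)]
      ring

/-- If all jobs have Z-ratio 1, the total expected reward of any schedule `S`
(a partition of the `n` jobs into sequences on `m` machines) equals
`m - ∑_h P_h(S)` where `P_h(S)` is the product of probabilities on machine `h`. -/
theorem stmt_3 (n m : ℕ) (π r : Fin n → ℝ)
    (hπ : ∀ j, π j ∈ Set.Ioo (0:ℝ) 1)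
    (hr : ∀ j, r j = (1 - π j) / π j)
    (S : Fin m → List (Fin n))
    (hpart : ((List.ofFn S).flatten).Perm (List.finRange n)) :
    ∑ h : Fin m, machineER π r (S h) =
      (m : ℝ) - ∑ h : Fin m, ((S h).map π).prod := by
  simp only [machineER_eq π r (fun j => (hπ j).1.ne') hr]
  rw [Finset.sum_sub_distrib]
  simp
end

section
/- For m = 2 parallel machines, for all integers t ∈ {1,2} and all p ∈ (0,1), (2 - t·p)/(2 - t·p^{2/t}) ≥ (2 + √2)/4, with equality possible only for t = 1, p = 2 - √2. -/
/-- Worst-case bound for two machines: for `t ∈ {1,2}` and `p ∈ (0,1)`,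
`(2 - t·p)/(2 - t·p^(2/t)) ≥ (2 + √2)/4`, with equality possible only for
`t = 1` and `p = 2 - √2`. -/
theorem stmt_12 (t : ℕ) (ht : t = 1 ∨ t = 2) (p : ℝ) (hp : p ∈ Set.Ioo (0:ℝ) 1) :
    (2 - (t : ℝ) * p) / (2 - (t : ℝ) * p ^ ((2 : ℝ) / t)) ≥ (2 + Real.sqrt 2) / 4 ∧
    ((2 - (t : ℝ) * p) / (2 - (t : ℝ) * p ^ ((2 : ℝ) / t)) = (2 + Real.sqrt 2) / 4 →
      t = 1 ∧ p = 2 - Real.sqrt 2) := by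
  obtain ⟨hp0, hp1⟩ := hp
  have hs : Real.sqrt 2 ^ 2 = 2 := Real.sq_sqrt (by norm_num)
  have hs0 : (0:ℝ) < Real.sqrt 2 := Real.sqrt_pos.mpr (by norm_num)
  have hs2 : Real.sqrt 2 < 2 := by nlinarith [hs, hs0]
  rcases ht with ht | ht
  · subst ht
    have hpow : p ^ ((2:ℝ)/(1:ℕ)) = p ^ 2 := by
      rw [show ((2:ℝ)/(1:ℕ)) = ((2:ℕ):ℝ) by norm_num, Real.rpow_natCast]
    rw [hpow]
    have hden : (0:ℝ) < 2 - (1:ℕ) * p ^ 2 := by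
      push_cast; nlinarith
    constructor
    · rw [ge_iff_le, div_le_div_iff₀ (by norm_num) hden]
      push_cast
      nlinarith [sq_nonneg (p - (2 - Real.sqrt 2)), hs0]
    · intro h
      refine ⟨rfl, ?_⟩
      rw [div_eq_div_iff hden.ne' (by norm_num)] at h
      push_cast at h
      have key : (2 + Real.sqrt 2) * (p - (2 - Real.sqrt 2)) ^ 2 = 0 := by nlinarith
      have := mul_eq_zero.mp key
      rcases this with h' | h'
      · nlinarith
      · have := pow_eq_zero_iff (n := 2) (by norm_num) |>.mp h'
        linarith
  · subst ht
    have hpow : p ^ ((2:ℝ)/(2:ℕ)) = p := by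
      rw [show ((2:ℝ)/(2:ℕ)) = (1:ℝ) by norm_num, Real.rpow_one]
    rw [hpow]
    have hden : (2:ℝ) - (2:ℕ) * p ≠ 0 := by push_cast; nlinarith
    have hone : (2 - ((2:ℕ):ℝ) * p) / (2 - ((2:ℕ):ℝ) * p) = 1 := div_self hden
    rw [hone]
    constructor
    · rw [ge_iff_le, div_le_one (by norm_num)]; linarith
    · intro h
      exfalso
      have : Real.sqrt 2 = 2 := by linarith [(by linarith [h.symm] : (2 + Real.sqrt 2) / 4 = 1)]
      nlinarith
end
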